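/- Let 0 ≤ m < n and let H' = { diag(g,h) : g ∈ O(1,m+1), h ∈ O(n−m) } ⊆ O(1,n+1) be the block diagonal embedding. Identify ℝ^{n+1} = ℝ^{m+1} × ℝ^{n−m} and write points of S^n as (x',x''). Then under the action ∘, the H'-orbit of the last standard basis vector e_{n+1} equals 𝒪₁ = { (x',x'') ∈ S^n : x'' ≠ 0 }, which is an open dense subset of S^n, and the H'-orbit of the first standard basis vector e₁ equals 𝒪₀ = { (x',0) : x' ∈ ℝ^{m+1}, |x'| = 1 }. -/

import Mathlib

open Matrix

noncomputable section

/-- The quadratic form matrix `J = diag(1,−1,…,−1)`. -/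
def Jmat (n : ℕ) : Matrix (Fin (n + 2)) (Fin (n + 2)) ℝ :=
  diagonal fun i => if i = 0 then 1 else -1

/-- Membership in `O(1,n+1)`: `gᵀ J g = J`. -/
def inO (n : ℕ) (g : Matrix (Fin (n + 2)) (Fin (n + 2)) ℝ) : Prop :=
  gᵀ * Jmat n * g = Jmat n

/-- The action `g∘x = v/t` where `g·(1,x)ᵀ = (t,v)`. -/
def act (n : ℕ) (g : Matrix (Fin (n + 2)) (Fin (n + 2)) ℝ) (x : Fin (n + 1) → ℝ) :
    Fin (n + 1) → ℝ :=
  (g.mulVec (Fin.cons 1 x) 0)⁻¹ • fun i => g.mulVec (Fin.cons 1 x) i.succ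

/-- The identification `Fin (m+2) ⊕ Fin (n−m) ≃ Fin (n+2)` (for `m < n`). -/
def blockEquiv (m n : ℕ) (h : m < n) : Fin (m + 2) ⊕ Fin (n - m) ≃ Fin (n + 2) :=
  finSumFinEquiv.trans (finCongr (by omega))

/-- Membership in the block diagonally embedded subgroup
`H' = { diag(g,h) : g ∈ O(1,m+1), h ∈ O(n−m) }`. -/
def inH' (m n : ℕ) (h : m < n) (g : Matrix (Fin (n + 2)) (Fin (n + 2)) ℝ) : Prop :=
  ∃ (A : Matrix (Fin (m + 2)) (Fin (m + 2)) ℝ) (B : Matrix (Fin (n - m)) (Fin (n - m)) ℝ),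
    inO m A ∧ Bᵀ * B = 1 ∧
    g = (reindex (blockEquiv m n h) (blockEquiv m n h)) (fromBlocks A 0 0 B)

/-!
`O(1, n + 1)` preserves the form `⟪v, w⟫ = vᵀ J w`, and `x ↦ (1, x)` maps `Sⁿ` onto the null
vectors with first coordinate `1`; so `g ∘ x` is the point of `Sⁿ` on the null ray through
`g (1, x)`. For `g = diag(A, B)` the vector `g (1, e_{n+1})` is `(A e₀, B e'')`, with `e''` the
last basis vector of `ℝⁿ⁻ᵐ`, and `g (1, e₁) = (A (e₀ + e₁), 0)`; hence the first orbit lies in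
`{x'' ≠ 0}` and the second in `{x'' = 0}`. Conversely, if `⟪a, a⟫ = ⟪b, b⟫`, the reflection in
`a - b` carries `a` to `b` whenever `a - b` is anisotropic (otherwise, for `⟪a, a⟫ ≠ 0`, the one
in `a + b` carries `a` to `-b`). This yields `A` and `B` with
`A e₀ = r⁻¹ (1, x')` and `B e'' = r⁻¹ x''`, where `r = |x''|`, resp. with `A (e₀ + e₁) = (1, x')`.
-/

namespace Matrix

variable {K ι : Type*} [Field K] [Fintype ι]

lemma IsSymm.dotProduct_mulVec_comm {S : Matrix ι ι K} (hS : S.IsSymm) (x y : ι → K) :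
    y ⬝ᵥ S *ᵥ x = x ⬝ᵥ S *ᵥ y := by
  rw [dotProduct_mulVec, ← mulVec_transpose, hS.eq, dotProduct_comm]

def reflection [DecidableEq ι] (S : Matrix ι ι K) (w : ι → K) : Matrix ι ι K :=
  1 - (2 / (w ⬝ᵥ S *ᵥ w)) • vecMulVec w (w ᵥ* S)

variable [DecidableEq ι]

lemma transpose_mul_mul_eq_iff {S g : Matrix ι ι K} :
    gᵀ * S * g = S ↔ ∀ x y, (g *ᵥ x) ⬝ᵥ S *ᵥ (g *ᵥ y) = x ⬝ᵥ S *ᵥ y := by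
  have key : ∀ x y, (g *ᵥ x) ⬝ᵥ S *ᵥ (g *ᵥ y) = x ⬝ᵥ (gᵀ * S * g) *ᵥ y := fun x y => by
    rw [dotProduct_mulVec, ← vecMul_transpose, vecMul_vecMul, ← dotProduct_mulVec,
      mulVec_mulVec, Matrix.mul_assoc]
  simp_rw [key]
  refine ⟨fun h x y => by rw [h], fun h => ?_⟩
  ext i j
  simpa [mulVec_single_one] using h (Pi.single i 1) (Pi.single j 1)

lemma reflection_mulVec (S : Matrix ι ι K) (w x : ι → K) :
    reflection S w *ᵥ x = x - (2 * (w ⬝ᵥ S *ᵥ x) / (w ⬝ᵥ S *ᵥ w)) • w := by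
  ext i
  simp [reflection, sub_mulVec, smul_mulVec, vecMulVec_mulVec, dotProduct_mulVec]
  ring

lemma reflection_isometry {S : Matrix ι ι K} (hS : S.IsSymm) {w : ι → K}
    (hw : w ⬝ᵥ S *ᵥ w ≠ 0) : (reflection S w)ᵀ * S * reflection S w = S := by
  refine transpose_mul_mul_eq_iff.2 fun x y => ?_
  simp only [reflection_mulVec, mulVec_sub, mulVec_smul, dotProduct_sub, sub_dotProduct,
    dotProduct_smul, smul_dotProduct, smul_eq_mul, hS.dotProduct_mulVec_comm x w]
  field_simp
  ring

lemma exists_isometry_mulVec_eq_of_sub {S : Matrix ι ι K} (hS : S.IsSymm) {a b : ι → K}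
    (hab : a ⬝ᵥ S *ᵥ a = b ⬝ᵥ S *ᵥ b) (hsub : (a - b) ⬝ᵥ S *ᵥ (a - b) ≠ 0) :
    ∃ g : Matrix ι ι K, gᵀ * S * g = S ∧ g *ᵥ a = b := by
  have hsub' : (a - b) ⬝ᵥ S *ᵥ (a - b) = 2 * ((a - b) ⬝ᵥ S *ᵥ a) := by
    simp only [mulVec_sub, dotProduct_sub, sub_dotProduct, hS.dotProduct_mulVec_comm a b, hab]
    ring
  have hcoef : 2 * ((a - b) ⬝ᵥ S *ᵥ a) / ((a - b) ⬝ᵥ S *ᵥ (a - b)) = 1 := by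
    rw [hsub', div_self (hsub' ▸ hsub)]
  exact ⟨reflection S (a - b), reflection_isometry hS hsub, by
    rw [reflection_mulVec, hcoef, one_smul, sub_sub_cancel]⟩

lemma exists_isometry_mulVec_eq [NeZero (2 : K)] {S : Matrix ι ι K} (hS : S.IsSymm)
    {a b : ι → K} (hab : a ⬝ᵥ S *ᵥ a = b ⬝ᵥ S *ᵥ b) (ha : a ⬝ᵥ S *ᵥ a ≠ 0) :
    ∃ g : Matrix ι ι K, gᵀ * S * g = S ∧ g *ᵥ a = b := by
  by_cases hsub : (a - b) ⬝ᵥ S *ᵥ (a - b) = 0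
  · -- `⟪a - b, a - b⟫ + ⟪a + b, a + b⟫ = 4 ⟪a, a⟫`, so `a + b` is anisotropic
    have hadd : (a - -b) ⬝ᵥ S *ᵥ (a - -b) ≠ 0 := by
      have h4 : (a - -b) ⬝ᵥ S *ᵥ (a - -b) = 4 * (a ⬝ᵥ S *ᵥ a) - (a - b) ⬝ᵥ S *ᵥ (a - b) := by
        simp only [sub_neg_eq_add, mulVec_sub, mulVec_add, dotProduct_sub, dotProduct_add,
          sub_dotProduct, add_dotProduct, hS.dotProduct_mulVec_comm a b, hab]
        ring
      have four : (4 : K) = 2 * 2 := by norm_num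
      rw [h4, hsub, sub_zero]
      exact mul_ne_zero (four ▸ mul_ne_zero two_ne_zero two_ne_zero) ha
    obtain ⟨g, hg, hga⟩ := exists_isometry_mulVec_eq_of_sub hS
      (by simpa [mulVec_neg] using hab) hadd
    exact ⟨-g, by simpa using hg, by simp [neg_mulVec, hga]⟩
  · exact exists_isometry_mulVec_eq_of_sub hS hab hsub

end Matrix

lemma sum_sq_eq_dotProduct_self {ι : Type*} [Fintype ι] (x : ι → ℝ) :
    ∑ i, x i ^ 2 = x ⬝ᵥ x := by
  simp [dotProduct, sq]

lemma sum_sq_single_one {ι : Type*} [Fintype ι] [DecidableEq ι] (p : ι) :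
    ∑ i, (Pi.single p 1 : ι → ℝ) i ^ 2 = 1 := by
  simp [Pi.single_apply]

lemma Jmat_isSymm (n : ℕ) : (Jmat n).IsSymm := isSymm_diagonal _

lemma cons_dotProduct_Jmat_mulVec_cons (n : ℕ) (a b : ℝ) (u v : Fin (n + 1) → ℝ) :
    Fin.cons a u ⬝ᵥ Jmat n *ᵥ Fin.cons b v = a * b - u ⬝ᵥ v := by
  simp [Jmat, dotProduct, Fin.sum_univ_succ, mulVec_diagonal, Finset.sum_neg_distrib]
  ring

lemma inO.det_ne_zero {n : ℕ} {g : Matrix (Fin (n + 2)) (Fin (n + 2)) ℝ} (hg : inO n g) :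
    g.det ≠ 0 := by
  have hJ : (Jmat n).det ≠ 0 := by simp [Jmat, Fin.prod_univ_succ]
  intro h0
  apply hJ
  rw [← hg, det_mul, det_mul, h0, mul_zero]

lemma act_eq_of_mulVec_eq_smul {n : ℕ} {g : Matrix (Fin (n + 2)) (Fin (n + 2)) ℝ}
    {x y : Fin (n + 1) → ℝ} {c : ℝ} (hc : c ≠ 0) (h : g *ᵥ Fin.cons 1 x = c • Fin.cons 1 y) :
    act n g x = y := by
  ext i
  simp [act, h, hc]

lemma sum_act_sq {n : ℕ} {g : Matrix (Fin (n + 2)) (Fin (n + 2)) ℝ} (hg : inO n g)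
    {x : Fin (n + 1) → ℝ} (hx : ∑ i, x i ^ 2 = 1) : ∑ i, act n g x i ^ 2 = 1 := by
  rw [sum_sq_eq_dotProduct_self] at hx ⊢
  have hnull := transpose_mul_mul_eq_iff.1 hg (Fin.cons 1 x) (Fin.cons 1 x)
  set w := g *ᵥ Fin.cons 1 x
  rw [← Fin.cons_self_tail w, cons_dotProduct_Jmat_mulVec_cons, cons_dotProduct_Jmat_mulVec_cons,
    hx, mul_one, sub_self, sub_eq_zero] at hnull
  have hw0 : w 0 ≠ 0 := by
    intro h0
    rw [h0, zero_mul, eq_comm, dotProduct_self_eq_zero] at hnull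
    have hw : w = 0 := by rw [← Fin.cons_self_tail w, h0, hnull]; exact cons_zero_zero
    exact exists_mulVec_eq_zero_iff.not.2 hg.det_ne_zero
      ⟨_, fun h1 => by simpa using congrFun h1 0, hw⟩
  change ((w 0)⁻¹ • Fin.tail w) ⬝ᵥ ((w 0)⁻¹ • Fin.tail w) = 1
  rw [smul_dotProduct, dotProduct_smul, ← hnull, smul_eq_mul, smul_eq_mul]
  field_simp

lemma exists_orthogonal_mulVec_eq {ι : Type*} [Fintype ι] [DecidableEq ι] {a b : ι → ℝ}
    (ha : a ⬝ᵥ a = 1) (hb : b ⬝ᵥ b = 1) : ∃ B : Matrix ι ι ℝ, Bᵀ * B = 1 ∧ B *ᵥ a = b := by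
  simpa using exists_isometry_mulVec_eq isSymm_one (a := a) (b := b) (by simp [ha, hb])
    (by simp [ha])

lemma exists_inO_mulVec_cons_eq {m : ℕ} {u v : Fin (m + 1) → ℝ} (hu : u ⬝ᵥ u = 1)
    (hv : v ⬝ᵥ v = 1) : ∃ A, inO m A ∧ A *ᵥ Fin.cons 1 u = Fin.cons 1 v := by
  by_cases huv : u = v
  · exact ⟨1, by simp [inO], by simp [huv]⟩
  · refine exists_isometry_mulVec_eq_of_sub (Jmat_isSymm m)
      (by simp [cons_dotProduct_Jmat_mulVec_cons, hu, hv]) ?_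
    have hsub : (Fin.cons 1 u - Fin.cons 1 v : Fin (m + 2) → ℝ) = Fin.cons 0 (u - v) := by
      ext i; cases i using Fin.cases <;> simp
    rwa [hsub, cons_dotProduct_Jmat_mulVec_cons, zero_mul, zero_sub, neg_ne_zero, Ne,
      dotProduct_self_eq_zero, sub_eq_zero]

lemma exists_inO_mulVec_eq_smul_cons {m : ℕ} {u : Fin (m + 1) → ℝ} {r : ℝ} (hr : r ≠ 0)
    (hru : r ^ 2 + u ⬝ᵥ u = 1) :
    ∃ A, inO m A ∧ A *ᵥ Fin.cons 1 0 = r⁻¹ • Fin.cons 1 u := by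
  have hsmul : (r⁻¹ • Fin.cons 1 u : Fin (m + 2) → ℝ) = Fin.cons r⁻¹ (r⁻¹ • u) := by
    ext i; cases i using Fin.cases <;> simp
  refine exists_isometry_mulVec_eq (Jmat_isSymm m) ?_ (by simp [cons_dotProduct_Jmat_mulVec_cons])
  rw [hsmul, cons_dotProduct_Jmat_mulVec_cons, cons_dotProduct_Jmat_mulVec_cons, smul_dotProduct,
    dotProduct_smul, dotProduct_zero, smul_eq_mul, smul_eq_mul, eq_sub_of_add_eq' hru]
  field_simp
  ring

lemma reindex_fromBlocks_mulVec_comp {R α β γ : Type*} [NonUnitalNonAssocSemiring R]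
    [Fintype α] [Fintype β] [Fintype γ] (e : α ⊕ β ≃ γ) (A : Matrix α α R) (B : Matrix β β R)
    (v : γ → R) :
    (reindex e e (fromBlocks A 0 0 B) *ᵥ v) ∘ e =
      Sum.elim (A *ᵥ (v ∘ e ∘ .inl)) (B *ᵥ (v ∘ e ∘ .inr)) := by
  rw [reindex_apply, submatrix_mulVec_equiv, Equiv.symm_symm, Function.comp_assoc,
    Equiv.symm_comp_self, Function.comp_id, fromBlocks_mulVec]
  simp [Function.comp_assoc]

/-- The splitting `ℝⁿ⁺¹ = ℝᵐ⁺¹ × ℝⁿ⁻ᵐ`, `x = (x', x'')`. -/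
def splitEquiv (m n : ℕ) (h : m < n) : Fin (m + 1) ⊕ Fin (n - m) ≃ Fin (n + 1) :=
  finSumFinEquiv.trans (finCongr (by omega))

section Blocks

variable {m n : ℕ} (h : m < n)

@[simp] lemma splitEquiv_inl_val (i : Fin (m + 1)) : (splitEquiv m n h (.inl i) : ℕ) = i := by
  simp [splitEquiv]

@[simp] lemma splitEquiv_inr_val (j : Fin (n - m)) :
    (splitEquiv m n h (.inr j) : ℕ) = m + 1 + j := by
  simp [splitEquiv]

lemma blockEquiv_inl_zero : blockEquiv m n h (.inl 0) = 0 := by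
  ext; simp [blockEquiv]

lemma blockEquiv_inl_succ (i : Fin (m + 1)) :
    blockEquiv m n h (.inl i.succ) = (splitEquiv m n h (.inl i)).succ := by
  ext; simp [blockEquiv]

lemma blockEquiv_inr (j : Fin (n - m)) :
    blockEquiv m n h (.inr j) = (splitEquiv m n h (.inr j)).succ := by
  ext; simp [blockEquiv]; omega

lemma le_val_iff_exists_splitEquiv_inr (i : Fin (n + 1)) :
    m + 1 ≤ (i : ℕ) ↔ ∃ j, splitEquiv m n h (.inr j) = i := by
  refine ⟨fun hi => ⟨⟨i - (m + 1), by omega⟩, by ext; simp; omega⟩, ?_⟩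
  rintro ⟨j, rfl⟩
  simp

lemma sum_splitEquiv {M : Type*} [AddCommMonoid M] (f : Fin (n + 1) → M) :
    ∑ i, f i = ∑ i, f (splitEquiv m n h (.inl i)) + ∑ j, f (splitEquiv m n h (.inr j)) := by
  rw [← (splitEquiv m n h).sum_comp, Fintype.sum_sum_type]

lemma cons_comp_blockEquiv {α : Type*} (t : α) (x : Fin (n + 1) → α) :
    (Fin.cons t x : Fin (n + 2) → α) ∘ blockEquiv m n h =
      Sum.elim (Fin.cons t (x ∘ splitEquiv m n h ∘ .inl)) (x ∘ splitEquiv m n h ∘ .inr) := by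
  ext (i | j)
  · cases i using Fin.cases <;> simp [blockEquiv_inl_zero, blockEquiv_inl_succ]
  · simp [blockEquiv_inr]

lemma Jmat_eq_reindex :
    Jmat n = reindex (blockEquiv m n h) (blockEquiv m n h) (fromBlocks (Jmat m) 0 0 (-1)) := by
  rw [Jmat, Jmat, ← diagonal_one, diagonal_neg, fromBlocks_diagonal, reindex_apply,
    submatrix_diagonal_equiv]
  congr
  ext i
  obtain ⟨i | j, rfl⟩ := (blockEquiv m n h).surjective i
  all_goals rw [Function.comp_apply, Equiv.symm_apply_apply]
  · cases i using Fin.cases <;> simp [blockEquiv_inl_zero, blockEquiv_inl_succ]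
  · simp [blockEquiv_inr]

lemma single_zero_comp_splitEquiv_inr :
    (Pi.single 0 1 : Fin (n + 1) → ℝ) ∘ splitEquiv m n h ∘ .inr = 0 := by
  ext j
  exact Pi.single_eq_of_ne (by simp [Fin.ext_iff]) _

lemma single_last_comp_splitEquiv_inl :
    (Pi.single (Fin.last n) 1 : Fin (n + 1) → ℝ) ∘ splitEquiv m n h ∘ .inl = 0 := by
  ext i
  exact Pi.single_eq_of_ne (by simp [Fin.ext_iff]; omega) _

lemma dotProduct_self_splitEquiv (x : Fin (n + 1) → ℝ) :
    (x ∘ splitEquiv m n h ∘ .inl) ⬝ᵥ (x ∘ splitEquiv m n h ∘ .inl) +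
      (x ∘ splitEquiv m n h ∘ .inr) ⬝ᵥ (x ∘ splitEquiv m n h ∘ .inr) = x ⬝ᵥ x := by
  simp only [dotProduct, sum_splitEquiv h (fun i => x i * x i), Function.comp_apply]

end Blocks

lemma inH'.inO {m n : ℕ} {h : m < n} {g : Matrix (Fin (n + 2)) (Fin (n + 2)) ℝ}
    (hg : inH' m n h g) : inO n g := by
  obtain ⟨A, B, hA, hB, rfl⟩ := hg
  rw [_root_.inO, Jmat_eq_reindex h, transpose_reindex, reindex_apply, reindex_apply,
    reindex_apply, submatrix_mul_equiv, submatrix_mul_equiv, fromBlocks_transpose,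
    fromBlocks_multiply, fromBlocks_multiply]
  simp [hB, show Aᵀ * Jmat m * A = Jmat m from hA]

section Orbits

variable {m n : ℕ} (h : m < n)

lemma reindex_fromBlocks_mulVec_cons_comp (A : Matrix (Fin (m + 2)) (Fin (m + 2)) ℝ)
    (B : Matrix (Fin (n - m)) (Fin (n - m)) ℝ) (x : Fin (n + 1) → ℝ) :
    (reindex (blockEquiv m n h) (blockEquiv m n h) (fromBlocks A 0 0 B) *ᵥ Fin.cons 1 x) ∘
        blockEquiv m n h =
      Sum.elim (A *ᵥ Fin.cons 1 (x ∘ splitEquiv m n h ∘ .inl))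
        (B *ᵥ (x ∘ splitEquiv m n h ∘ .inr)) := by
  simp only [reindex_fromBlocks_mulVec_comp, ← Function.comp_assoc, cons_comp_blockEquiv,
    Sum.elim_comp_inl, Sum.elim_comp_inr]

lemma act_splitEquiv_inr (A : Matrix (Fin (m + 2)) (Fin (m + 2)) ℝ)
    (B : Matrix (Fin (n - m)) (Fin (n - m)) ℝ) (x : Fin (n + 1) → ℝ) (j : Fin (n - m)) :
    act n (reindex (blockEquiv m n h) (blockEquiv m n h) (fromBlocks A 0 0 B)) x
        (splitEquiv m n h (.inr j)) =
      ((reindex (blockEquiv m n h) (blockEquiv m n h) (fromBlocks A 0 0 B) *ᵥ Fin.cons 1 x) 0)⁻¹ *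
        (B *ᵥ (x ∘ splitEquiv m n h ∘ .inr)) j := by
  rw [act, Pi.smul_apply, smul_eq_mul, ← blockEquiv_inr]
  exact congrArg _ (congrFun (reindex_fromBlocks_mulVec_cons_comp h A B x) (.inr j))

lemma exists_act_single_last_ne_zero {g : Matrix (Fin (n + 2)) (Fin (n + 2)) ℝ}
    (hg : inH' m n h g) :
    ∃ i : Fin (n + 1), m + 1 ≤ (i : ℕ) ∧ act n g (Pi.single (Fin.last n) 1) i ≠ 0 := by
  have hsphere := sum_act_sq hg.inO (sum_sq_single_one (Fin.last n))
  obtain ⟨A, B, -, hB, rfl⟩ := hg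
  set u := (Pi.single (Fin.last n) 1 : Fin (n + 1) → ℝ) ∘ splitEquiv m n h ∘ .inr
  obtain ⟨j₀, hj₀⟩ := (le_val_iff_exists_splitEquiv_inr h (Fin.last n)).1
    (by rw [Fin.val_last]; omega)
  have hu : u ≠ 0 := fun hu => by simpa [u, hj₀] using congrFun hu j₀
  have hBu : B *ᵥ u ≠ 0 := fun hBu => hu <| by
    rw [← one_mulVec u, ← hB, ← mulVec_mulVec, hBu, mulVec_zero]
  obtain ⟨j, hj⟩ := Function.ne_iff.1 hBu
  refine ⟨splitEquiv m n h (.inr j), by simp, ?_⟩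
  rw [act_splitEquiv_inr]
  refine mul_ne_zero (fun h0 => ?_) hj
  rw [act, h0, zero_smul] at hsphere
  simp at hsphere

lemma act_single_zero_splitEquiv_inr {g : Matrix (Fin (n + 2)) (Fin (n + 2)) ℝ}
    (hg : inH' m n h g) (j : Fin (n - m)) :
    act n g (Pi.single 0 1) (splitEquiv m n h (.inr j)) = 0 := by
  obtain ⟨A, B, -, -, rfl⟩ := hg
  rw [act_splitEquiv_inr, single_zero_comp_splitEquiv_inr, mulVec_zero, Pi.zero_apply,
    mul_zero]

lemma exists_inH'_act_single_last_eq {y : Fin (n + 1) → ℝ} (hy : ∑ i, y i ^ 2 = 1)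
    (hne : ∃ i : Fin (n + 1), m + 1 ≤ (i : ℕ) ∧ y i ≠ 0) :
    ∃ g, inH' m n h g ∧ act n g (Pi.single (Fin.last n) 1) = y := by
  set y' := y ∘ splitEquiv m n h ∘ .inl
  set y'' := y ∘ splitEquiv m n h ∘ .inr
  set e := (Pi.single (Fin.last n) 1 : Fin (n + 1) → ℝ) ∘ splitEquiv m n h ∘ .inr
  have he : e ⬝ᵥ e = 1 := by
    have := dotProduct_self_splitEquiv h (Pi.single (Fin.last n) 1)
    rwa [single_last_comp_splitEquiv_inl, zero_dotProduct, zero_add, single_dotProduct,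
      Pi.single_eq_same, mul_one] at this
  obtain ⟨i, hi, hyi⟩ := hne
  obtain ⟨j, rfl⟩ := (le_val_iff_exists_splitEquiv_inr h i).1 hi
  have hpos : 0 < y'' ⬝ᵥ y'' :=
    lt_of_le_of_ne (Finset.sum_nonneg fun _ _ => mul_self_nonneg _) fun h0 =>
      hyi (congrFun (dotProduct_self_eq_zero.1 h0.symm) j)
  set r := √(y'' ⬝ᵥ y'')
  have hr : 0 < r := Real.sqrt_pos.2 hpos
  have hr2 : r ^ 2 = y'' ⬝ᵥ y'' := Real.sq_sqrt hpos.le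
  obtain ⟨A, hA, hAe⟩ := exists_inO_mulVec_eq_smul_cons hr.ne' (u := y') (by
    rw [hr2, add_comm, dotProduct_self_splitEquiv, ← sum_sq_eq_dotProduct_self, hy])
  obtain ⟨B, hB, hBe⟩ := exists_orthogonal_mulVec_eq he (b := r⁻¹ • y'') (by
    rw [smul_dotProduct, dotProduct_smul, ← hr2, smul_eq_mul, smul_eq_mul]; field_simp)
  refine ⟨_, ⟨A, B, hA, hB, rfl⟩, act_eq_of_mulVec_eq_smul (inv_ne_zero hr.ne') ?_⟩
  apply (blockEquiv m n h).surjective.injective_comp_right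
  refine (reindex_fromBlocks_mulVec_cons_comp h A B _).trans ?_
  change _ = r⁻¹ • (Fin.cons 1 y ∘ blockEquiv m n h)
  rw [single_last_comp_splitEquiv_inl, hAe, hBe, cons_comp_blockEquiv]
  ext (i | j) <;> simp [y', y'']

lemma exists_inH'_act_single_zero_eq {y : Fin (n + 1) → ℝ} (hy : ∑ i, y i ^ 2 = 1)
    (hzero : ∀ i : Fin (n + 1), m + 1 ≤ (i : ℕ) → y i = 0) :
    ∃ g, inH' m n h g ∧ act n g (Pi.single 0 1) = y := by
  have hy'' : y ∘ splitEquiv m n h ∘ .inr = 0 := funext fun j => hzero _ (by simp)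
  have hy' := dotProduct_self_splitEquiv h y
  rw [hy'', zero_dotProduct, add_zero, ← sum_sq_eq_dotProduct_self y, hy] at hy'
  have he := dotProduct_self_splitEquiv h (Pi.single 0 1)
  rw [single_zero_comp_splitEquiv_inr, zero_dotProduct, add_zero, single_dotProduct,
    Pi.single_eq_same, mul_one] at he
  obtain ⟨A, hA, hAe⟩ := exists_inO_mulVec_cons_eq he hy'
  refine ⟨_, ⟨A, 1, hA, by simp, rfl⟩, act_eq_of_mulVec_eq_smul one_ne_zero ?_⟩
  apply (blockEquiv m n h).surjective.injective_comp_right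
  refine (reindex_fromBlocks_mulVec_cons_comp h A 1 _).trans ?_
  change _ = (1 : ℝ) • (Fin.cons 1 y ∘ blockEquiv m n h)
  rw [single_zero_comp_splitEquiv_inr, hAe, cons_comp_blockEquiv, hy'', mulVec_zero, one_smul]

end Orbits

lemma isOpen_setOf_exists_apply_ne_zero {ι : Type*} (s : Set (ι → ℝ)) (P : ι → Prop) :
    IsOpen {y : s | ∃ i, P i ∧ y.1 i ≠ 0} := by
  have hU : {y : s | ∃ i, P i ∧ y.1 i ≠ 0} = ⋃ (i) (_ : P i), {y : s | y.1 i ≠ 0} := by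
    ext; simp
  rw [hU]
  exact isOpen_iUnion fun i => isOpen_iUnion fun _ => isOpen_ne_fun
    ((continuous_apply i).comp continuous_subtype_val) continuous_const

lemma dense_setOf_apply_ne_zero {ι : Type*} [Fintype ι] [DecidableEq ι] (p : ι) :
    Dense {y : {x : ι → ℝ // ∑ i, x i ^ 2 = 1} | y.1 p ≠ 0} := by
  intro y
  by_cases hyp : y.1 p ≠ 0
  · exact subset_closure hyp
  rw [not_not] at hyp
  -- the great circle from `y` towards the unit vector `eₚ ⊥ y` leaves `{yₚ = 0}` at once
  let γ : ℝ → {x : ι → ℝ // ∑ i, x i ^ 2 = 1} := fun θ =>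
    ⟨Real.cos θ • y.1 + Real.sin θ • Pi.single p 1, by
      have hy := y.2
      rw [sum_sq_eq_dotProduct_self] at hy ⊢
      simp [dotProduct_add, add_dotProduct, hyp, hy, ← sq]⟩
  have hγ : Continuous γ := by fun_prop
  have hγ0 : γ 0 = y := Subtype.ext (by simp [γ])
  refine mem_closure_of_tendsto (hγ0 ▸ (hγ.tendsto 0).mono_left nhdsWithin_le_nhds :
    Filter.Tendsto γ (nhdsWithin 0 (Set.Ioi 0)) (nhds y)) ?_
  filter_upwards [Ioo_mem_nhdsGT Real.pi_pos] with θ hθ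
  simp [γ, hyp, (Real.sin_pos_of_pos_of_lt_pi hθ.1 hθ.2).ne']

/-- the `H'`-orbit of `e_{n+1}` is `𝒪₁ = {(x',x'') ∈ Sⁿ : x'' ≠ 0}`, which is open
and dense in `Sⁿ`, and the `H'`-orbit of `e₁` is `𝒪₀ = {(x',0) : |x'| = 1}`. -/
theorem stmt14 (m n : ℕ) (h : m < n) :
    {y : Fin (n + 1) → ℝ | ∃ g, inH' m n h g ∧ act n g (Pi.single (Fin.last n) 1) = y} =
        {y : Fin (n + 1) → ℝ |
          (∑ i, y i ^ 2) = 1 ∧ ∃ i : Fin (n + 1), m + 1 ≤ (i : ℕ) ∧ y i ≠ 0} ∧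
      IsOpen {y : {x : Fin (n + 1) → ℝ // (∑ i, x i ^ 2) = 1} |
          ∃ i : Fin (n + 1), m + 1 ≤ (i : ℕ) ∧ y.1 i ≠ 0} ∧
      Dense {y : {x : Fin (n + 1) → ℝ // (∑ i, x i ^ 2) = 1} |
          ∃ i : Fin (n + 1), m + 1 ≤ (i : ℕ) ∧ y.1 i ≠ 0} ∧
      {y : Fin (n + 1) → ℝ | ∃ g, inH' m n h g ∧ act n g (Pi.single 0 1) = y} =
        {y : Fin (n + 1) → ℝ |
          (∑ i, y i ^ 2) = 1 ∧ ∀ i : Fin (n + 1), m + 1 ≤ (i : ℕ) → y i = 0} := by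
  refine ⟨Set.ext fun y => ⟨?_, ?_⟩, isOpen_setOf_exists_apply_ne_zero _ _, ?_,
    Set.ext fun y => ⟨?_, ?_⟩⟩
  · rintro ⟨g, hg, rfl⟩
    exact ⟨sum_act_sq hg.inO (sum_sq_single_one _), exists_act_single_last_ne_zero h hg⟩
  · rintro ⟨hy, hne⟩
    exact exists_inH'_act_single_last_eq h hy hne
  · exact (dense_setOf_apply_ne_zero (Fin.last n)).mono fun y hy =>
      ⟨Fin.last n, by rw [Fin.val_last]; omega, hy⟩
  · rintro ⟨g, hg, rfl⟩
    refine ⟨sum_act_sq hg.inO (sum_sq_single_one _), fun i hi => ?_⟩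
    obtain ⟨j, rfl⟩ := (le_val_iff_exists_splitEquiv_inr h i).1 hi
    exact act_single_zero_splitEquiv_inr h hg j
  · rintro ⟨hy, hzero⟩
    exact exists_inH'_act_single_zero_eq h hy hzero
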